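/- arXiv:2209.09831 — 6 statements merged into one kernel-verified Lean document; each statement's English description precedes it below -/
import Mathlib

section
/- In the Boolean algebra $\mathcal{A}$ of finite and cofinite subsets of an uncountable set $X$, if $x_1, x_2, \ldots$ are distinct elements of $X$ and $A_n = \{x_n\}$, then the sequence $(A_n)$ $O_2$-converges to $\emptyset$, but $(A_n)$ is not $O_1$-convergent (since any $O_1$-convergent sequence in $\mathcal{A}$ is eventually constant). Hence $O_2$-convergence does not imply $O_1$-convergence. -/
/-!
`O₂`: the cofinite elements form a downward directed family with infimum `∅`, and every cofinite
set contains all but finitely many of the distinct points `x n`.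

Not `O₁`: a lower sequence `y` with `y γ ⊆ {x δ}` for all large `δ` is empty, so its supremum `l`
is `∅`. An upper sequence `z` with `{x δ} ⊆ z γ` for all large `δ` consists of infinite, hence
cofinite, sets; as `X` is uncountable their intersection contains a point `p`, and then
`{p} ≤ l = ∅`.
-/

open Filter Set

/-- Eventually, for nets indexed by a preordered set. -/
def EvAtTop {Γ : Type*} [Preorder Γ] (p : Γ → Prop) : Prop :=
  ∃ γ₀, ∀ γ, γ₀ ≤ γ → p γ

/-- $O_1$-convergence of a net to a point in a poset. -/
def O1Conv {P : Type*} {Γ : Type*} [PartialOrder P] [Preorder Γ]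
    (x : Γ → P) (l : P) : Prop :=
  ∃ y z : Γ → P, Monotone y ∧ Antitone z ∧
    IsLUB (Set.range y) l ∧ IsGLB (Set.range z) l ∧
    EvAtTop (fun γ => y γ ≤ x γ ∧ x γ ≤ z γ)

/-- $O_2$-convergence of a net to a point in a poset. -/
def O2Conv {P : Type*} {Γ : Type*} [PartialOrder P] [Preorder Γ]
    (x : Γ → P) (l : P) : Prop :=
  ∃ M N : Set P, M.Nonempty ∧ DirectedOn (· ≤ ·) M ∧
    N.Nonempty ∧ DirectedOn (· ≥ ·) N ∧
    IsLUB M l ∧ IsGLB N l ∧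
    ∀ m ∈ M, ∀ n ∈ N, EvAtTop (fun γ => m ≤ x γ ∧ x γ ≤ n)

lemma evAtTop_iff_eventually {Γ : Type*} [Preorder Γ] [IsDirectedOrder Γ] [Nonempty Γ]
    {p : Γ → Prop} : EvAtTop p ↔ ∀ᶠ γ in atTop, p γ :=
  eventually_atTop.symm

section OrderConvergence

variable {P Γ : Type*} [PartialOrder P] [Preorder Γ] {x : Γ → P} {l : P}

lemma O2Conv.of_isGLB {N : Set P} (hN : N.Nonempty) (hdir : DirectedOn (· ≥ ·) N)
    (hl : IsGLB N l) (hev : ∀ n ∈ N, EvAtTop fun γ => l ≤ x γ ∧ x γ ≤ n) : O2Conv x l :=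
  ⟨{l}, N, singleton_nonempty l, directedOn_singleton l, hN, hdir, isLUB_singleton, hl,
    fun _ hm => (mem_singleton_iff.1 hm).symm ▸ hev⟩

variable [IsDirectedOrder Γ]

lemma O1Conv.exists_isLUB_range_evAtTop_le (h : O1Conv x l) :
    ∃ y : Γ → P, IsLUB (range y) l ∧ ∀ γ, EvAtTop fun δ => y γ ≤ x δ := by
  obtain ⟨y, _, hy, _, hlub, _, γ₀, hev⟩ := h
  refine ⟨y, hlub, fun γ => ?_⟩
  obtain ⟨δ₀, hγ, hγ₀⟩ := exists_ge_ge γ γ₀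
  exact ⟨δ₀, fun δ hδ => (hy (hγ.trans hδ)).trans (hev δ (hγ₀.trans hδ)).1⟩

lemma O1Conv.exists_isGLB_range_evAtTop_ge (h : O1Conv x l) :
    ∃ z : Γ → P, IsGLB (range z) l ∧ ∀ γ, EvAtTop fun δ => x δ ≤ z γ := by
  obtain ⟨_, z, _, hz, _, hglb, γ₀, hev⟩ := h
  refine ⟨z, hglb, fun γ => ?_⟩
  obtain ⟨δ₀, hγ, hγ₀⟩ := exists_ge_ge γ γ₀
  exact ⟨δ₀, fun δ hδ => (hev δ (hγ₀.trans hδ)).2.trans (hz (hγ.trans hδ))⟩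

end OrderConvergence

section CofiniteSequence

variable {ι X : Type*} {f : Filter ι} [f.NeBot] {x : ι → X} {s : Set X}

lemma Set.infinite_of_eventually_mem (hx : Tendsto x f cofinite) (h : ∀ᶠ i in f, x i ∈ s) :
    s.Infinite := fun hs =>
  let ⟨_, his, hisc⟩ := (h.and (hx.eventually hs.compl_mem_cofinite)).exists
  hisc his

lemma Set.eq_empty_of_eventually_subset_singleton (hx : Tendsto x f cofinite)
    (h : ∀ᶠ i in f, s ⊆ {x i}) : s = ∅ :=
  eq_empty_of_forall_notMem fun p hp =>
    let ⟨_, hip, hine⟩ := (h.and (hx.eventually (eventually_cofinite_ne p))).exists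
    hine (hip hp).symm

end CofiniteSequence

lemma Set.nonempty_iInter_of_countable_compl {ι X : Type*} [Countable ι] [Uncountable X]
    {s : ι → Set X} (hs : ∀ i, (s i)ᶜ.Countable) : (⋂ i, s i).Nonempty := by
  refine nonempty_iff_ne_empty.2 fun h => not_countable_univ (α := X) ?_
  simpa [← compl_iInter, h] using countable_iUnion hs

abbrev FiniteCofinite (X : Type*) := {A : Set X // A.Finite ∨ Aᶜ.Finite}

namespace FiniteCofinite

variable {X : Type*}

def empty : FiniteCofinite X := ⟨∅, Or.inl finite_empty⟩

def single (a : X) : FiniteCofinite X := ⟨{a}, Or.inl (finite_singleton a)⟩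

lemma directedOn_ge_setOf_compl_finite :
    DirectedOn (· ≥ ·) {B : FiniteCofinite X | (B : Set X)ᶜ.Finite} := fun B hB C hC =>
  have h : ((B : Set X) ∩ C)ᶜ.Finite := by rw [compl_inter]; exact hB.union hC
  ⟨⟨B ∩ C, Or.inr h⟩, h, inter_subset_left, inter_subset_right⟩

lemma isGLB_setOf_compl_finite :
    IsGLB {B : FiniteCofinite X | (B : Set X)ᶜ.Finite} empty := by
  refine ⟨fun B _ => empty_subset (B : Set X), fun L hL p hp => ?_⟩
  have hp_compl : (⟨{p}ᶜ, Or.inr (by simp)⟩ : FiniteCofinite X) ∈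
      {B : FiniteCofinite X | (B : Set X)ᶜ.Finite} := by simp
  exact hL hp_compl hp rfl

variable {x : ℕ → X}

lemma o2Conv_single_empty (hx : Tendsto x atTop cofinite) :
    O2Conv (fun n => single (x n)) empty :=
  .of_isGLB ⟨⟨univ, Or.inr (by simp)⟩, by simp⟩ directedOn_ge_setOf_compl_finite
    isGLB_setOf_compl_finite fun B hB => evAtTop_iff_eventually.2 <|
      (hx.eventually (mem_cofinite.2 hB)).mono fun _ hn =>
        ⟨empty_subset _, singleton_subset_iff.2 hn⟩

variable {l : FiniteCofinite X}

lemma val_eq_empty_of_o1Conv_single (hx : Tendsto x atTop cofinite)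
    (h : O1Conv (fun n => single (x n)) l) : (l : Set X) = ∅ := by
  obtain ⟨y, hy, hyx⟩ := h.exists_isLUB_range_evAtTop_le
  have hy_empty (γ : ℕ) : (y γ : Set X) = ∅ :=
    eq_empty_of_eventually_subset_singleton hx (evAtTop_iff_eventually.1 (hyx γ))
  have hl : l ≤ empty := (isLUB_le_iff hy).2 <| forall_mem_range.2 fun γ => (hy_empty γ).le
  exact subset_empty_iff.1 hl

lemma val_nonempty_of_o1Conv_single [Uncountable X] (hx : Tendsto x atTop cofinite)
    (h : O1Conv (fun n => single (x n)) l) : (l : Set X).Nonempty := by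
  obtain ⟨z, hz, hxz⟩ := h.exists_isGLB_range_evAtTop_ge
  have hz_cofinite (γ : ℕ) : (z γ : Set X)ᶜ.Finite :=
    (z γ).2.resolve_left <| infinite_of_eventually_mem hx <|
      (evAtTop_iff_eventually.1 (hxz γ)).mono fun _ hn => hn rfl
  obtain ⟨p, hp⟩ := nonempty_iInter_of_countable_compl fun γ => (hz_cofinite γ).countable
  have hp_le : single p ≤ l := (le_isGLB_iff hz).2 <| forall_mem_range.2 fun γ =>
    singleton_subset_iff.2 (mem_iInter.1 hp γ)
  exact ⟨p, hp_le rfl⟩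

end FiniteCofinite

theorem o2_not_o1_in_finite_cofinite_algebra
    {X : Type*} [Uncountable X] (x : ℕ → X) (hx : Function.Injective x) :
    let 𝒜 : Type _ := {A : Set X // A.Finite ∨ Aᶜ.Finite}
    let A : ℕ → 𝒜 := fun n => ⟨{x n}, Or.inl (Set.finite_singleton _)⟩
    let bot : 𝒜 := ⟨∅, Or.inl Set.finite_empty⟩
    O2Conv A bot ∧ ¬ ∃ l : 𝒜, O1Conv A l := by
  intro 𝒜 A bot
  have hx' : Tendsto x atTop cofinite := Nat.cofinite_eq_atTop ▸ hx.tendsto_cofinite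
  refine ⟨FiniteCofinite.o2Conv_single_empty hx', fun ⟨l, hl⟩ => ?_⟩
  exact (FiniteCofinite.val_nonempty_of_o1Conv_single hx' hl).ne_empty
    (FiniteCofinite.val_eq_empty_of_o1Conv_single hx' hl)
end

section
/- In a poset $P$, every net that $O_2$-converges to a point $x$ admits a subnet that $O_1$-converges to $x$. -/
/-- A bundled nonempty directed preordered index type (for subnets). -/
structure DirectedIndex : Type (u + 1) where
  carrier : Type u
  [pre : Preorder carrier]
  [nonempty : Nonempty carrier]
  [directed : IsDirected carrier (· ≤ ·)]

attribute [instance] DirectedIndex.pre DirectedIndex.nonempty DirectedIndex.directed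

universe u v

theorem EvAtTop.exists {Γ : Type*} [Preorder Γ] {p : Γ → Prop} (hp : EvAtTop p) : ∃ γ, p γ :=
  let ⟨γ₀, hγ₀⟩ := hp
  ⟨γ₀, hγ₀ γ₀ le_rfl⟩

theorem EvAtTop.exists_ge {Γ : Type*} [Preorder Γ] [IsDirected Γ (· ≤ ·)] {p : Γ → Prop}
    (hp : EvAtTop p) (γ : Γ) : ∃ γ', γ ≤ γ' ∧ p γ' := by
  obtain ⟨γ₀, hγ₀⟩ := hp
  obtain ⟨γ', hγγ', hγ₀γ'⟩ := directed_of (· ≤ ·) γ γ₀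
  exact ⟨γ', hγγ', hγ₀ γ' hγ₀γ'⟩

structure BracketIndex {P : Type u} {Γ : Type v} [Preorder P] (x : Γ → P) (M N : Set P) where
  lower : P
  upper : P
  idx : Γ
  lower_mem : lower ∈ M
  upper_mem : upper ∈ N
  lower_le : lower ≤ x idx
  le_upper : x idx ≤ upper

namespace BracketIndex

variable {P : Type u} {Γ : Type v} [PartialOrder P] [Preorder Γ] {x : Γ → P} {M N : Set P}

instance : Preorder (BracketIndex x M N) :=
  Preorder.lift fun i => (i.lower, OrderDual.toDual i.upper, i.idx)

theorem monotone_lower : Monotone (lower : BracketIndex x M N → P) := fun _ _ h => h.1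

theorem antitone_upper : Antitone (upper : BracketIndex x M N → P) := fun _ _ h => h.2.1

theorem monotone_idx : Monotone (idx : BracketIndex x M N → Γ) := fun _ _ h => h.2.2

section Convergent

variable (hev : ∀ m ∈ M, ∀ n ∈ N, EvAtTop fun γ => m ≤ x γ ∧ x γ ≤ n)
include hev

theorem exists_bracket {m n : P} (hm : m ∈ M) (hn : n ∈ N) :
    ∃ i : BracketIndex x M N, i.lower = m ∧ i.upper = n := by
  obtain ⟨γ, hmγ, hγn⟩ := (hev m hm n hn).exists
  exact ⟨⟨m, n, γ, hm, hn, hmγ, hγn⟩, rfl, rfl⟩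

theorem exists_bracket_ge [IsDirected Γ (· ≤ ·)] {m n : P} (hm : m ∈ M) (hn : n ∈ N) (γ₀ : Γ) :
    ∃ i : BracketIndex x M N, i.lower = m ∧ i.upper = n ∧ γ₀ ≤ i.idx := by
  obtain ⟨γ, hγ₀γ, hmγ, hγn⟩ := (hev m hm n hn).exists_ge γ₀
  exact ⟨⟨m, n, γ, hm, hn, hmγ, hγn⟩, rfl, rfl, hγ₀γ⟩

theorem range_lower (hN : N.Nonempty) : Set.range (lower : BracketIndex x M N → P) = M := by
  obtain ⟨n, hn⟩ := hN
  refine Set.Subset.antisymm (Set.range_subset_iff.2 lower_mem) fun m hm => ?_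
  obtain ⟨i, hi, -⟩ := exists_bracket hev hm hn
  exact ⟨i, hi⟩

theorem range_upper (hM : M.Nonempty) : Set.range (upper : BracketIndex x M N → P) = N := by
  obtain ⟨m, hm⟩ := hM
  refine Set.Subset.antisymm (Set.range_subset_iff.2 upper_mem) fun n hn => ?_
  obtain ⟨i, -, hi⟩ := exists_bracket hev hm hn
  exact ⟨i, hi⟩

theorem isDirected [IsDirected Γ (· ≤ ·)] (hM : DirectedOn (· ≤ ·) M)
    (hN : DirectedOn (· ≥ ·) N) : IsDirected (BracketIndex x M N) (· ≤ ·) := by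
  refine ⟨fun i j => ?_⟩
  obtain ⟨m, hm, him, hjm⟩ := hM i.lower i.lower_mem j.lower j.lower_mem
  obtain ⟨n, hn, hin, hjn⟩ := hN i.upper i.upper_mem j.upper j.upper_mem
  obtain ⟨γ, hiγ, hjγ⟩ := directed_of (· ≤ ·) i.idx j.idx
  obtain ⟨k, rfl, rfl, hγk⟩ := exists_bracket_ge hev hm hn γ
  exact ⟨k, ⟨him, hin, hiγ.trans hγk⟩, ⟨hjm, hjn, hjγ.trans hγk⟩⟩

end Convergent

end BracketIndex

open BracketIndex in
theorem o2_subnet_o1_general {P : Type u} {Γ : Type v} [PartialOrder P] [Preorder Γ]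
    [IsDirected Γ (· ≤ ·)]
    (x : Γ → P) (l : P) (h : O2Conv x l) :
    ∃ (Λ : DirectedIndex.{max u v}) (φ : Λ.carrier → Γ),
      Monotone φ ∧ (∀ γ : Γ, ∃ lam, γ ≤ φ lam) ∧
      O1Conv (fun lam => x (φ lam)) l := by
  obtain ⟨M, N, ⟨m₀, hm₀⟩, hMdir, ⟨n₀, hn₀⟩, hNdir, hlub, hglb, hev⟩ := h
  obtain ⟨i₀, -, -⟩ := exists_bracket hev hm₀ hn₀
  have : Nonempty (BracketIndex x M N) := ⟨i₀⟩
  have := BracketIndex.isDirected hev hMdir hNdir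
  refine ⟨⟨BracketIndex x M N⟩, idx, monotone_idx, fun γ => ?_, ?_⟩
  · obtain ⟨i, -, -, hγi⟩ := exists_bracket_ge hev hm₀ hn₀ γ
    exact ⟨i, hγi⟩
  · refine ⟨lower, upper, monotone_lower, antitone_upper, ?_, ?_,
      ⟨i₀, fun i _ => ⟨i.lower_le, i.le_upper⟩⟩⟩
    · rwa [range_lower hev ⟨n₀, hn₀⟩]
    · rwa [range_upper hev ⟨m₀, hm₀⟩]

theorem o2_subnet_o1 {P : Type u} {Γ : Type v} [PartialOrder P] [Preorder Γ]
    [Nonempty Γ] [IsDirected Γ (· ≤ ·)]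
    (x : Γ → P) (l : P) (h : O2Conv x l) :
    ∃ (Λ : DirectedIndex.{max u v}) (φ : Λ.carrier → Γ),
      Monotone φ ∧ (∀ γ : Γ, ∃ lam, γ ≤ φ lam) ∧
      O1Conv (fun lam => x (φ lam)) l :=
  o2_subnet_o1_general x l h
end

section
/- In a commutative lattice-ordered group $G$, for all $s, x, y \in G$ and $a \in G_+$: $|f_{s,s+a}(x) - f_{s,s+a}(y)| \le |x-y| \wedge a$, where $f_{s,t}(x) := (x \wedge t) \vee s$. -/
theorem inf_sup_mem_Icc {L : Type*} [Lattice L] (x : L) {s t : L} (hst : s ≤ t) :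
    (x ⊓ t) ⊔ s ∈ Set.Icc s t :=
  ⟨le_sup_right, sup_le inf_le_right hst⟩

section LatticeOrderedGroup

variable {G : Type*} [Lattice G] [AddCommGroup G] [CovariantClass G G (· + ·) (· ≤ ·)]

theorem abs_sub_le_of_mem_Icc {s t u v : G} (hu : u ∈ Set.Icc s t) (hv : v ∈ Set.Icc s t) :
    |u - v| ≤ t - s := by
  rw [abs_le', neg_sub]
  exact ⟨sub_le_sub hu.2 hv.1, sub_le_sub hv.2 hu.1⟩

theorem abs_inf_sup_sub_inf_sup_le_abs (x y s t : G) :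
    |(x ⊓ t) ⊔ s - (y ⊓ t) ⊔ s| ≤ |x - y| :=
  (abs_sup_sub_sup_le_abs _ _ _).trans (abs_inf_sub_inf_le_abs _ _ _)

end LatticeOrderedGroup

theorem abs_ftt_sub_le {G : Type*} [Lattice G] [AddCommGroup G]
    [CovariantClass G G (· + ·) (· ≤ ·)]
    (s x y a : G) (ha : 0 ≤ a) :
    |((x ⊓ (s + a)) ⊔ s) - ((y ⊓ (s + a)) ⊔ s)| ≤ |x - y| ⊓ a := by
  have hst : s ≤ s + a := le_add_of_nonneg_right ha
  refine le_inf (abs_inf_sup_sub_inf_sup_le_abs x y s (s + a)) ?_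
  simpa only [add_sub_cancel_left] using
    abs_sub_le_of_mem_Icc (inf_sup_mem_Icc x hst) (inf_sup_mem_Icc y hst)
end

section
/- In a commutative lattice-ordered group $G$, for all $x, y \in G$ and $a \in G_+$: $|x-y| \wedge a = |f_{y-a,y}(x) - f_{y-a,y}(y)| + |f_{y,y+a}(x) - f_{y,y+a}(y)|$, where $f_{s,t}(z) := (z \wedge t) \vee s$. -/
/-!
Translating by `y` reduces both truncations to truncations of `u = x - y` at the origin:
`f_{y,y+a}(x) - y = u⁺ ⊓ a` and `f_{y-a,y}(x) - y = -(u⁻ ⊓ a)`. Since `u⁺ ⊓ u⁻ = 0`, the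
elements `u⁺ ⊓ a` and `u⁻ ⊓ a` are disjoint, so their sum is their join `(u⁺ ⊔ u⁻) ⊓ a = |u| ⊓ a`.
-/

namespace LatticeOrderedAddCommGroup

variable {G : Type*} [Lattice G]

/-- The paper's `f_{s,t}`. -/
def truncation (s t z : G) : G := (z ⊓ t) ⊔ s

lemma truncation_of_le_of_le {s t z : G} (hs : s ≤ z) (ht : z ≤ t) : truncation s t z = z := by
  rw [truncation, inf_eq_left.2 ht, sup_eq_left.2 hs]

variable [AddCommGroup G] [AddLeftMono G]

lemma add_eq_sup_of_inf_eq_zero {a b : G} (h : a ⊓ b = 0) : a + b = a ⊔ b := by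
  rw [← inf_add_sup, h, zero_add]

lemma posPart_sup_negPart (u : G) : u⁺ ⊔ u⁻ = |u| := by
  rw [← add_eq_sup_of_inf_eq_zero (posPart_inf_negPart_eq_zero u), posPart_add_negPart]

lemma posPart_inf_add_negPart_inf {a : G} (ha : 0 ≤ a) (u : G) :
    u⁺ ⊓ a + u⁻ ⊓ a = |u| ⊓ a := by
  let _ : DistribLattice G := AddCommGroup.toDistribLattice G
  have disjoint : (u⁺ ⊓ a) ⊓ (u⁻ ⊓ a) = 0 :=
    le_antisymm
      ((inf_le_inf inf_le_left inf_le_left).trans (posPart_inf_negPart_eq_zero u).le)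
      (le_inf (le_inf (posPart_nonneg u) ha) (le_inf (negPart_nonneg u) ha))
  rw [add_eq_sup_of_inf_eq_zero disjoint, ← inf_sup_right, posPart_sup_negPart]

lemma truncation_add_right (s t z c : G) :
    truncation (s + c) (t + c) (z + c) = truncation s t z + c := by
  rw [truncation, truncation, sup_add, inf_add]

lemma truncation_zero_left {a : G} (ha : 0 ≤ a) (u : G) : truncation 0 a u = u⁺ ⊓ a := by
  let _ : DistribLattice G := AddCommGroup.toDistribLattice G
  rw [truncation, sup_inf_right, sup_eq_left.2 ha, posPart_def]

lemma truncation_neg_zero (a u : G) : truncation (-a) 0 u = -(u⁻ ⊓ a) := by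
  rw [truncation, neg_inf, negPart_def, neg_sup, neg_neg, neg_zero]

lemma truncation_sub_truncation_self_upper {a : G} (ha : 0 ≤ a) (x y : G) :
    truncation y (y + a) x - truncation y (y + a) y = (x - y)⁺ ⊓ a := by
  have shift : truncation y (y + a) x = truncation 0 a (x - y) + y := by
    rw [← truncation_add_right, zero_add, add_comm a, sub_add_cancel]
  rw [shift, truncation_of_le_of_le le_rfl (le_add_of_nonneg_right ha), add_sub_cancel_right,
    truncation_zero_left ha]

lemma truncation_sub_truncation_self_lower {a : G} (ha : 0 ≤ a) (x y : G) :
    truncation (y - a) y x - truncation (y - a) y y = -((x - y)⁻ ⊓ a) := by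
  have shift : truncation (y - a) y x = truncation (-a) 0 (x - y) + y := by
    rw [← truncation_add_right, zero_add, neg_add_eq_sub, sub_add_cancel]
  rw [shift, truncation_of_le_of_le (sub_le_self y ha) le_rfl, add_sub_cancel_right,
    truncation_neg_zero]

end LatticeOrderedAddCommGroup

open LatticeOrderedAddCommGroup in
theorem abs_inf_eq_sum_of_truncations {G : Type*} [Lattice G] [AddCommGroup G]
    [CovariantClass G G (· + ·) (· ≤ ·)]
    (x y a : G) (ha : 0 ≤ a) :
    |x - y| ⊓ a =
      |((x ⊓ y) ⊔ (y - a)) - ((y ⊓ y) ⊔ (y - a))| +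
      |((x ⊓ (y + a)) ⊔ y) - ((y ⊓ (y + a)) ⊔ y)| := by
  change _ = |truncation (y - a) y x - truncation (y - a) y y| +
    |truncation y (y + a) x - truncation y (y + a) y|
  rw [truncation_sub_truncation_self_lower ha, truncation_sub_truncation_self_upper ha, abs_neg,
    abs_of_nonneg (le_inf (negPart_nonneg _) ha), abs_of_nonneg (le_inf (posPart_nonneg _) ha),
    add_comm, posPart_inf_add_negPart_inf ha]
end

section
/- Let $(G,+)$ be a commutative $\ell$-group, $A$ a solid subgroup of $G$, and $F := \{f_{s,t} : s,t \in G,\ t-s \in A_+\}$ where $f_{s,t}(x) = (x \wedge t) \vee s$. Then for $i \in \{1,2\}$, a net $(x_\gamma)$ $\mathfrak{u}_A O_i$-converges to $x$ (i.e., $|x_\gamma - x| \wedge a \to 0$ in $O_i$-convergence for every $a \in A_+$) if and only if it $FO_i$-converges to $x$ (i.e., $f(x_\gamma) \to f(x)$ in $O_i$-convergence for every $f \in F$). -/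
/-!
In an ℓ-group both `O₁`- and `O₂`-convergence of `x` to `l` say that `|x γ - l|` is eventually
dominated by a net, resp. by a downward directed set, with infimum `0`; such domination passes to
smaller nets and to sums. A truncation `f_{s,t}` is a contraction bounded by `t - s`, so
`|f_{s,t} (x γ) - f_{s,t} l| ≤ |x γ - l| ⊓ (t - s)`. Conversely `|x γ - l| ⊓ a` is dominated by
the sum of the errors of the two truncations `f_{l-a,l}` and `f_{l,l+a}`.
-/

open Set
open scoped Pointwise

lemma DirectedOn.image2 {α β γ : Type*} {ra : α → α → Prop} {rb : β → β → Prop}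
    {rc : γ → γ → Prop} {f : α → β → γ} {s : Set α} {t : Set β}
    (hf : ∀ ⦃a a' b b'⦄, ra a a' → rb b b' → rc (f a b) (f a' b'))
    (hs : DirectedOn ra s) (ht : DirectedOn rb t) : DirectedOn rc (image2 f s t) := by
  rintro _ ⟨a₁, ha₁, b₁, hb₁, rfl⟩ _ ⟨a₂, ha₂, b₂, hb₂, rfl⟩
  obtain ⟨a, ha, h₁a, h₂a⟩ := hs a₁ ha₁ a₂ ha₂
  obtain ⟨b, hb, h₁b, h₂b⟩ := ht b₁ hb₁ b₂ hb₂
  exact ⟨f a b, mem_image2_of_mem ha hb, hf h₁a h₁b, hf h₂a h₂b⟩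

section Eventually

variable {Γ : Type*} [Preorder Γ] {p q : Γ → Prop}

lemma EvAtTop.mono (h : EvAtTop p) (hpq : ∀ γ, p γ → q γ) : EvAtTop q :=
  let ⟨γ₀, hγ₀⟩ := h
  ⟨γ₀, fun γ hγ => hpq γ (hγ₀ γ hγ)⟩

lemma EvAtTop.and [IsDirected Γ (· ≤ ·)] (hp : EvAtTop p) (hq : EvAtTop q) :
    EvAtTop fun γ => p γ ∧ q γ := by
  obtain ⟨γ₁, hγ₁⟩ := hp
  obtain ⟨γ₂, hγ₂⟩ := hq
  obtain ⟨γ₀, h₁, h₂⟩ := directed_of (· ≤ ·) γ₁ γ₂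
  exact ⟨γ₀, fun γ hγ => ⟨hγ₁ γ (h₁.trans hγ), hγ₂ γ (h₂.trans hγ)⟩⟩

end Eventually

section LatticeOrderedGroup

variable {G : Type*} [Lattice G] [AddCommGroup G] [AddLeftMono G]

lemma abs_sub_le_sub_of_le_of_le {y z u v : G} (hyu : y ≤ u) (huz : u ≤ z) (hyv : y ≤ v)
    (hvz : v ≤ z) : |u - v| ≤ z - y :=
  abs_le'.2 ⟨sub_le_sub huz hyv, by rw [neg_sub]; exact sub_le_sub hvz hyu⟩

lemma mem_Icc_of_abs_sub_le {x l c : G} (h : |x - l| ≤ c) : x ∈ Icc (l - c) (l + c) :=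
  ⟨sub_le_comm.1 (neg_sub x l ▸ (abs_le'.1 h).2), sub_le_iff_le_add'.1 (abs_le'.1 h).1⟩

lemma inf_add_le_add_inf {u v w : G} (hu : 0 ≤ u) (hv : 0 ≤ v) (hw : 0 ≤ w) :
    (u + v) ⊓ w ≤ u ⊓ w + v ⊓ w := by
  rw [add_inf v w (u ⊓ w), inf_add u w v, inf_add u w w]
  refine le_inf (le_inf inf_le_left ?_) (le_inf ?_ ?_)
  · exact inf_le_right.trans (le_add_of_nonneg_right hv)
  · exact inf_le_right.trans (le_add_of_nonneg_left hu)
  · exact inf_le_right.trans (le_add_of_nonneg_left hw)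

lemma abs_inf_sup_sub_inf_sup_le {s t : G} (hst : s ≤ t) (x y : G) :
    |(x ⊓ t) ⊔ s - (y ⊓ t) ⊔ s| ≤ |x - y| ⊓ (t - s) :=
  le_inf ((abs_sup_sub_sup_le_abs _ _ _).trans (abs_inf_sub_inf_le_abs _ _ _))
    (abs_sub_le_sub_of_le_of_le le_sup_right (sup_le inf_le_right hst) le_sup_right
      (sup_le inf_le_right hst))

/-- The truncations `f_{y-a,y}` and `f_{y,y+a}` measure the negative and the positive part
of `x - y`. -/
lemma abs_sub_inf_le {a : G} (ha : 0 ≤ a) (x y : G) :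
    |x - y| ⊓ a ≤ |(x ⊓ y) ⊔ (y - a) - (y ⊓ y) ⊔ (y - a)|
      + |(x ⊓ (y + a)) ⊔ y - (y ⊓ (y + a)) ⊔ y| := by
  let : DistribLattice G := AddCommGroup.toDistribLattice G
  rw [inf_idem, sup_eq_left.2 (sub_le_self y ha), inf_eq_left.2 (le_add_of_nonneg_right ha),
    sup_idem]
  have below : (x ⊓ y) ⊔ (y - a) - y ≤ 0 := sub_nonpos.2 (sup_le inf_le_right (sub_le_self y ha))
  have above : 0 ≤ (x ⊓ (y + a)) ⊔ y - y := sub_nonneg.2 le_sup_right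
  rw [abs_of_nonpos below, abs_of_nonneg above, neg_sub, sub_sup, sub_inf, sub_self,
    sub_sub_cancel, sup_sub, inf_sub, sub_self, add_sub_cancel_left, sup_inf_right,
    sup_eq_left.2 ha, ← neg_sub x y, ← negPart_def, ← posPart_def, ← negPart_add_posPart]
  exact inf_add_le_add_inf (negPart_nonneg _) (posPart_nonneg _) ha

end LatticeOrderedGroup

section OrderNull

variable {G : Type*} [Preorder G] [Zero G] {Γ : Type*} [Preorder Γ]

def O1Null (u : Γ → G) : Prop :=
  ∃ z : Γ → G, Antitone z ∧ IsGLB (range z) 0 ∧ EvAtTop fun γ => u γ ≤ z γ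

def O2Null (u : Γ → G) : Prop :=
  ∃ N : Set G, N.Nonempty ∧ DirectedOn (· ≥ ·) N ∧ IsGLB N 0 ∧ ∀ n ∈ N, EvAtTop fun γ => u γ ≤ n

lemma O1Null.mono {u v : Γ → G} (hu : O1Null u) (hvu : ∀ γ, v γ ≤ u γ) : O1Null v :=
  let ⟨z, hz, hz0, hev⟩ := hu
  ⟨z, hz, hz0, hev.mono fun γ h => (hvu γ).trans h⟩

lemma O2Null.mono {u v : Γ → G} (hu : O2Null u) (hvu : ∀ γ, v γ ≤ u γ) : O2Null v :=
  let ⟨N, hN, hNd, hN0, hev⟩ := hu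
  ⟨N, hN, hNd, hN0, fun n hn => (hev n hn).mono fun γ h => (hvu γ).trans h⟩

end OrderNull

section OrderConvergence

variable {G : Type*} [Lattice G] [AddCommGroup G] [AddLeftMono G]
variable {Γ : Type*} [Preorder Γ] [IsDirected Γ (· ≤ ·)]

lemma O1Null.add {u v : Γ → G} (hu : O1Null u) (hv : O1Null v) : O1Null fun γ => u γ + v γ := by
  obtain ⟨z₁, hz₁, hz₁0, hev₁⟩ := hu
  obtain ⟨z₂, hz₂, hz₂0, hev₂⟩ := hv
  refine ⟨fun γ => z₁ γ + z₂ γ, hz₁.add hz₂, ?_,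
    (hev₁.and hev₂).mono fun γ h => add_le_add h.1 h.2⟩
  refine (zero_add (0 : G) ▸ hz₁0.add hz₂0).of_isCoinitialFor ?_ ?_
  · rintro _ ⟨γ, rfl⟩
    exact add_mem_add (mem_range_self γ) (mem_range_self γ)
  · rintro _ ⟨_, ⟨γ, rfl⟩, _, ⟨δ, rfl⟩, rfl⟩
    obtain ⟨β, hγβ, hδβ⟩ := directed_of (· ≤ ·) γ δ
    exact ⟨_, ⟨β, rfl⟩, add_le_add (hz₁ hγβ) (hz₂ hδβ)⟩

lemma O2Null.add {u v : Γ → G} (hu : O2Null u) (hv : O2Null v) : O2Null fun γ => u γ + v γ := by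
  obtain ⟨N₁, hN₁, hN₁d, hN₁0, hev₁⟩ := hu
  obtain ⟨N₂, hN₂, hN₂d, hN₂0, hev₂⟩ := hv
  refine ⟨N₁ + N₂, hN₁.add hN₂, hN₁d.image2 (fun _ _ _ _ => add_le_add) hN₂d,
    zero_add (0 : G) ▸ hN₁0.add hN₂0, ?_⟩
  rintro _ ⟨n₁, hn₁, n₂, hn₂, rfl⟩
  exact ((hev₁ n₁ hn₁).and (hev₂ n₂ hn₂)).mono fun γ h => add_le_add h.1 h.2

lemma o1Conv_iff_o1Null_abs_sub (x : Γ → G) (l : G) :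
    O1Conv x l ↔ O1Null fun γ => |x γ - l| := by
  constructor
  · rintro ⟨y, z, hy, hz, hyl, hzl, hev⟩
    refine ⟨fun γ => z γ - y γ, fun _ _ h => sub_le_sub (hz h) (hy h), ?_, hev.mono fun γ h =>
      abs_sub_le_sub_of_le_of_le h.1 h.2 (hyl.1 ⟨γ, rfl⟩) (hzl.1 ⟨γ, rfl⟩)⟩
    refine (sub_self l ▸ hzl.sub hyl).of_isCoinitialFor ?_ ?_
    · rintro _ ⟨γ, rfl⟩
      exact sub_mem_sub (mem_range_self γ) (mem_range_self γ)
    · rintro _ ⟨_, ⟨γ, rfl⟩, _, ⟨δ, rfl⟩, rfl⟩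
      obtain ⟨β, hγβ, hδβ⟩ := directed_of (· ≤ ·) γ δ
      exact ⟨_, ⟨β, rfl⟩, sub_le_sub (hz hγβ) (hy hδβ)⟩
  · rintro ⟨z, hz, hz0, hev⟩
    refine ⟨fun γ => l - z γ, fun γ => l + z γ, fun _ _ h => sub_le_sub_left (hz h) l,
      fun _ _ h => add_le_add_right (hz h) l, ?_, ?_, hev.mono fun γ h => ?_⟩
    · have := (isLUB_singleton (a := l)).sub hz0
      rwa [singleton_sub, ← range_comp, sub_zero] at this
    · have := (isGLB_singleton (a := l)).add hz0
      rwa [singleton_add, ← range_comp, add_zero] at this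
    · exact mem_Icc_of_abs_sub_le h

lemma o2Conv_iff_o2Null_abs_sub (x : Γ → G) (l : G) :
    O2Conv x l ↔ O2Null fun γ => |x γ - l| := by
  constructor
  · rintro ⟨M, N, hM, hMd, hN, hNd, hMl, hNl, hev⟩
    refine ⟨N - M, hN.sub hM, hNd.image2 (fun _ _ _ _ h h' => sub_le_sub h h') hMd,
      sub_self l ▸ hNl.sub hMl, ?_⟩
    rintro _ ⟨n, hn, m, hm, rfl⟩
    exact (hev m hm n hn).mono fun γ h => abs_sub_le_sub_of_le_of_le h.1 h.2 (hMl.1 hm) (hNl.1 hn)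
  · rintro ⟨N, hN, hNd, hN0, hev⟩
    refine ⟨{l} - N, {l} + N, (singleton_nonempty l).sub hN,
      (directedOn_singleton l).image2 (fun _ _ _ _ h h' => sub_le_sub h h') hNd,
      (singleton_nonempty l).add hN,
      (directedOn_singleton l).image2 (fun _ _ _ _ h h' => add_le_add h h') hNd,
      by simpa only [sub_zero] using (isLUB_singleton (a := l)).sub hN0,
      by simpa only [add_zero] using (isGLB_singleton (a := l)).add hN0, ?_⟩
    rintro _ ⟨_, rfl, n, hn, rfl⟩ _ ⟨_, rfl, n', hn', rfl⟩
    exact ((hev n hn).and (hev n' hn')).mono fun γ h =>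
      ⟨(mem_Icc_of_abs_sub_le h.1).1, (mem_Icc_of_abs_sub_le h.2).2⟩

end OrderConvergence

section Truncation

variable {G : Type*} [Lattice G] [AddCommGroup G] [AddLeftMono G] {Γ : Type*}

theorem forall_conv_abs_sub_inf_iff_forall_conv_inf_sup {Conv : (Γ → G) → G → Prop}
    {Null : (Γ → G) → Prop} (conv_iff : ∀ x l, Conv x l ↔ Null fun γ => |x γ - l|)
    (mono : ∀ {u v : Γ → G}, Null u → (∀ γ, v γ ≤ u γ) → Null v)
    (add : ∀ {u v : Γ → G}, Null u → Null v → Null fun γ => u γ + v γ)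
    (A : Set G) (x : Γ → G) (l : G) :
    (∀ a ∈ A, 0 ≤ a → Conv (fun γ => |x γ - l| ⊓ a) 0) ↔
      ∀ f ∈ {f : G → G | ∃ s t : G, t - s ∈ A ∧ 0 ≤ t - s ∧ f = fun x => (x ⊓ t) ⊔ s},
        Conv (fun γ => f (x γ)) (f l) := by
  have abs_inf_sub_zero (a : G) (ha : 0 ≤ a) (γ : Γ) : |(|x γ - l| ⊓ a) - 0| = |x γ - l| ⊓ a := by
    rw [sub_zero, abs_of_nonneg (le_inf (abs_nonneg _) ha)]
  constructor
  · rintro h _ ⟨s, t, hA, hst, rfl⟩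
    have hnull := (conv_iff _ _).1 (h (t - s) hA hst)
    refine (conv_iff _ _).2 (mono hnull fun γ => ?_)
    rw [abs_inf_sub_zero _ hst]
    exact abs_inf_sup_sub_inf_sup_le (sub_nonneg.1 hst) _ _
  · intro h a hA ha
    have below := (conv_iff _ _).1 (h _ ⟨l - a, l, by rwa [sub_sub_cancel],
      by rwa [sub_sub_cancel], rfl⟩)
    have above := (conv_iff _ _).1 (h _ ⟨l, l + a, by rwa [add_sub_cancel_left],
      by rwa [add_sub_cancel_left], rfl⟩)
    refine (conv_iff _ _).2 (mono (add below above) fun γ => ?_)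
    rw [abs_inf_sub_zero a ha]
    exact abs_sub_inf_le ha _ _

end Truncation

theorem uAOi_iff_FOi_general {G : Type*} {Γ : Type*} [Lattice G] [AddCommGroup G]
    [CovariantClass G G (· + ·) (· ≤ ·)] [Preorder Γ]
    [IsDirected Γ (· ≤ ·)]
    (A : AddSubgroup G)
    (F : Set (G → G))
    (hF : F = {f | ∃ s t : G, t - s ∈ A ∧ 0 ≤ t - s ∧ f = fun x => (x ⊓ t) ⊔ s})
    (x : Γ → G) (l : G) :
    ((∀ a ∈ A, 0 ≤ a → O1Conv (fun γ => |x γ - l| ⊓ a) (0 : G)) ↔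
      (∀ f ∈ F, O1Conv (fun γ => f (x γ)) (f l))) ∧
    ((∀ a ∈ A, 0 ≤ a → O2Conv (fun γ => |x γ - l| ⊓ a) (0 : G)) ↔
      (∀ f ∈ F, O2Conv (fun γ => f (x γ)) (f l))) := by
  subst hF
  exact ⟨forall_conv_abs_sub_inf_iff_forall_conv_inf_sup o1Conv_iff_o1Null_abs_sub
      O1Null.mono O1Null.add A x l,
    forall_conv_abs_sub_inf_iff_forall_conv_inf_sup o2Conv_iff_o2Null_abs_sub
      O2Null.mono O2Null.add A x l⟩

theorem uAOi_iff_FOi {G : Type*} {Γ : Type*} [Lattice G] [AddCommGroup G]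
    [CovariantClass G G (· + ·) (· ≤ ·)] [Preorder Γ]
    [Nonempty Γ] [IsDirected Γ (· ≤ ·)]
    (A : AddSubgroup G) (hA : ∀ a ∈ A, ∀ x : G, |x| ≤ |a| → x ∈ A)
    (F : Set (G → G))
    (hF : F = {f | ∃ s t : G, t - s ∈ A ∧ 0 ≤ t - s ∧ f = fun x => (x ⊓ t) ⊔ s})
    (x : Γ → G) (l : G) :
    ((∀ a ∈ A, 0 ≤ a → O1Conv (fun γ => |x γ - l| ⊓ a) (0 : G)) ↔
      (∀ f ∈ F, O1Conv (fun γ => f (x γ)) (f l))) ∧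
    ((∀ a ∈ A, 0 ≤ a → O2Conv (fun γ => |x γ - l| ⊓ a) (0 : G)) ↔
      (∀ f ∈ F, O2Conv (fun γ => f (x γ)) (f l))) :=
  uAOi_iff_FOi_general A F hF x l
end

section
/- Let $X$ be a topological space whose topology makes $X$ a lattice with continuous operations, let $u$ be a lattice uniformity on the distributive lattice $L$, let $u^*$ be the weakest lattice uniformity agreeing with $u$ on all order bounded subsets, and let $S$ be a sublattice of $L$. Then $S$ is closed in the $u^*$-topology if and only if $S$ is closed in the $u$-topology. More precisely: for any infinite cardinal $\kappa$, $S$ is $\kappa$-closed w.r.t. the $u^*$-topology (contains limits of all convergent nets from $S$ indexed by directed sets of cardinality at most $\kappa$) iff it is $\kappa$-closed w.r.t. the $u$-topology. -/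
universe u

/-- `S` is `κ`-closed w.r.t. the topology `t`: it contains the limit of every
convergent net from `S` indexed by a directed set of cardinality at most `κ`. -/
def KClosed {L : Type u} (t : TopologicalSpace L) (κ : Cardinal.{u}) (S : Set L) : Prop :=
  ∀ (Λ : DirectedIndex.{u}), Cardinal.mk Λ.carrier ≤ κ →
    ∀ s : Λ.carrier → L, (∀ γ, s γ ∈ S) →
      ∀ x : L, (∀ U ∈ @nhds L t x, ∃ γ₀, ∀ γ, γ₀ ≤ γ → s γ ∈ U) → x ∈ S

/-!
Write `clamp a b x = x ⊓ b ⊔ a` for the retraction of `L` onto `[a, b]`, so that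
`u* = clampUniformity u`. Every `clamp a b` is continuous from the `u*`-topology to the
`u`-topology and `u*` is coarser than `u`, so only "`u`-closed implies `u*`-closed" needs an
argument. Let `s γ → x` in `u*` be a net in `S`. For `a ≤ b` with `clamp a b (S) ⊆ S`, the net
`clamp a b (s γ)` lies in `S` and `u`-converges to `clamp a b x`, so `clamp a b x ∈ S`. Fixing
some `s ∈ S`, five well-chosen intervals then give successively `(s ⊔ x) ⊓ (s ⊔ y) ∈ S` for
`y ∈ S`, `s ⊔ x ∈ S`, `x ⊓ s ⊔ y ⊓ s ∈ S` for `y ∈ S`, `x ⊓ s ∈ S`, and finally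
`x = clamp (x ⊓ s) (s ⊔ x) x ∈ S`; distributivity is what makes each clamp preserve `S`.
-/

open Set Filter Topology

section Clamp

variable {L : Type*}

def clamp [Lattice L] (a b x : L) : L := x ⊓ b ⊔ a

theorem clamp_eq_sup_inf [DistribLattice L] {a b : L} (x : L) (hab : a ≤ b) :
    clamp a b x = (a ⊔ x) ⊓ b := by
  rw [clamp, sup_comm, sup_inf_assoc_of_le x hab]

variable [DistribLattice L] {S : Set L}

theorem mem_of_forall_clamp_mem (hsup : SupClosed S) (hinf : InfClosed S) {s x : L} (hs : s ∈ S)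
    (h : ∀ a b, a ≤ b → MapsTo (clamp a b) S S → clamp a b x ∈ S) : x ∈ S := by
  have upper_inf : ∀ y ∈ S, (s ⊔ x) ⊓ (s ⊔ y) ∈ S := by
    intro y hy
    rw [← clamp_eq_sup_inf x le_sup_left]
    refine h _ _ le_sup_left fun w hw => ?_
    rw [clamp_eq_sup_inf w le_sup_left]
    exact hinf (hsup hs hw) (hsup hs hy)
  have upper : s ⊔ x ∈ S := by
    rw [← inf_idem (s ⊔ x), ← clamp_eq_sup_inf x le_sup_left]
    refine h _ _ le_sup_left fun w hw => ?_
    rw [clamp_eq_sup_inf w le_sup_left, inf_comm]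
    exact upper_inf w hw
  have lower_sup : ∀ y ∈ S, x ⊓ s ⊔ y ⊓ s ∈ S := fun y hy =>
    h (y ⊓ s) s inf_le_right fun w hw => hsup (hinf hw hs) (hinf hy hs)
  have lower : x ⊓ s ∈ S := by
    rw [← sup_idem (x ⊓ s)]
    refine h (x ⊓ s) s inf_le_right fun w hw => ?_
    rw [clamp, sup_comm]
    exact lower_sup w hw
  have hle : x ⊓ s ≤ s ⊔ x := inf_le_left.trans le_sup_right
  have clamp_self : clamp (x ⊓ s) (s ⊔ x) x = x := by
    rw [clamp, inf_eq_left.2 le_sup_right, sup_eq_left.2 inf_le_left]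
  rw [← clamp_self]
  refine h _ _ hle fun w hw => ?_
  rw [clamp_eq_sup_inf w hle]
  exact hinf (hsup lower hw) upper

theorem mem_of_tendsto_of_continuous_clamp {t t' : TopologicalSpace L}
    (hcont : ∀ a b : L, a ≤ b → Continuous[t', t] (clamp a b))
    (hsup : SupClosed S) (hinf : InfClosed S) {ι : Type*} {F : Filter ι} [F.NeBot] {s : ι → L}
    (hs : ∀ᶠ i in F, s i ∈ S) {x : L} (hx : Tendsto s F (@nhds L t' x))
    (hclosed : ∀ g : L → L, MapsTo g S S → ∀ y, Tendsto (g ∘ s) F (@nhds L t y) → y ∈ S) :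
    x ∈ S := by
  obtain ⟨i, hi⟩ := hs.exists
  exact mem_of_forall_clamp_mem hsup hinf hi fun a b hab hmaps =>
    hclosed _ hmaps _ ((@Continuous.tendsto L L t' t _ (hcont a b hab) x).comp hx)

end Clamp

section Topology

variable {L : Type u}

theorem IsSeqClosed.mono {t₁ t₂ : TopologicalSpace L} {S : Set L} (hS : @IsSeqClosed L t₂ S)
    (h : t₁ ≤ t₂) : @IsSeqClosed L t₁ S :=
  fun _ _ hxS hxp => hS hxS (hxp.mono_right (nhds_mono h))

theorem KClosed.mono {t₁ t₂ : TopologicalSpace L} {κ : Cardinal.{u}} {S : Set L}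
    (hS : KClosed t₂ κ S) (h : t₁ ≤ t₂) : KClosed t₁ κ S :=
  fun Λ hΛ s hs x hx => hS Λ hΛ s hs x fun U hU => hx U (nhds_mono h hU)

theorem kClosed_iff_tendsto {t : TopologicalSpace L} {κ : Cardinal.{u}} {S : Set L} :
    KClosed t κ S ↔ ∀ Λ : DirectedIndex.{u}, Cardinal.mk Λ.carrier ≤ κ →
      ∀ s : Λ.carrier → L, (∀ γ, s γ ∈ S) →
        ∀ x : L, Tendsto s atTop (@nhds L t x) → x ∈ S := by
  simp only [KClosed, tendsto_atTop']

variable [DistribLattice L] {t t' : TopologicalSpace L} {S : Set L}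

theorem IsClosed.of_continuous_clamp (hcont : ∀ a b : L, a ≤ b → Continuous[t', t] (clamp a b))
    (hsup : SupClosed S) (hinf : InfClosed S) (hS : IsClosed[t] S) : IsClosed[t'] S := by
  refine (@isClosed_iff_forall_filter L t' S).2 fun x F _ hF hFx => ?_
  have hFS : ∀ᶠ w in F, w ∈ S := le_principal_iff.1 hF
  exact mem_of_tendsto_of_continuous_clamp hcont hsup hinf (s := id) hFS hFx
    fun g hg y hy => @IsClosed.mem_of_tendsto L t _ _ _ _ _ _ hS hy (hFS.mono fun _ hw => hg hw)

theorem IsSeqClosed.of_continuous_clamp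
    (hcont : ∀ a b : L, a ≤ b → Continuous[t', t] (clamp a b))
    (hsup : SupClosed S) (hinf : InfClosed S) (hS : @IsSeqClosed L t S) : @IsSeqClosed L t' S :=
  fun _ _ hxS hxp => mem_of_tendsto_of_continuous_clamp hcont hsup hinf
    (Eventually.of_forall hxS) hxp fun _ hg _ hy => hS (fun n => hg (hxS n)) hy

theorem KClosed.of_continuous_clamp (hcont : ∀ a b : L, a ≤ b → Continuous[t', t] (clamp a b))
    (hsup : SupClosed S) (hinf : InfClosed S) {κ : Cardinal.{u}} (hS : KClosed t κ S) :
    KClosed t' κ S := by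
  rw [kClosed_iff_tendsto] at hS ⊢
  exact fun Λ hΛ s hs x hx => mem_of_tendsto_of_continuous_clamp hcont hsup hinf
    (Eventually.of_forall hs) hx fun _ hg y hy => hS Λ hΛ _ (fun γ => hg (hs γ)) y hy

end Topology

section Uniformity

variable {L : Type*} [DistribLattice L]

abbrev clampUniformity (u : UniformSpace L) : UniformSpace L :=
  ⨅ p : {q : L × L // q.1 ≤ q.2}, UniformSpace.comap (clamp p.val.1 p.val.2) u

theorem uniformContinuous_clamp [UniformSpace L]
    (hsup : UniformContinuous fun p : L × L => p.1 ⊔ p.2)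
    (hinf : UniformContinuous fun p : L × L => p.1 ⊓ p.2) (a b : L) :
    UniformContinuous (clamp a b) :=
  hsup.comp ((hinf.comp (uniformContinuous_id.prodMk uniformContinuous_const)).prodMk
    uniformContinuous_const)

theorem le_clampUniformity [u : UniformSpace L]
    (hsup : UniformContinuous fun p : L × L => p.1 ⊔ p.2)
    (hinf : UniformContinuous fun p : L × L => p.1 ⊓ p.2) : u ≤ clampUniformity u :=
  le_iInf fun _ => uniformContinuous_iff_le_comap.1 (uniformContinuous_clamp hsup hinf _ _)

theorem continuous_clamp_clampUniformity (u : UniformSpace L) {a b : L} (hab : a ≤ b) :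
    Continuous[(clampUniformity u).toTopologicalSpace, u.toTopologicalSpace] (clamp a b) :=
  @UniformContinuous.continuous L L (clampUniformity u) u _
    (uniformContinuous_iff_le_comap.2 (iInf_le _ (⟨(a, b), hab⟩ : {q : L × L // q.1 ≤ q.2})))

end Uniformity

theorem sublattice_closed_ustar_iff_closed {L : Type u} [DistribLattice L]
    [u : UniformSpace L]
    (hsup : UniformContinuous fun p : L × L => p.1 ⊔ p.2)
    (hinf : UniformContinuous fun p : L × L => p.1 ⊓ p.2)
    (S : Set L)
    (hSsup : ∀ a ∈ S, ∀ b ∈ S, a ⊔ b ∈ S) (hSinf : ∀ a ∈ S, ∀ b ∈ S, a ⊓ b ∈ S)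
    (ustar : UniformSpace L)
    (hustar : ustar = ⨅ p : {q : L × L // q.1 ≤ q.2},
      UniformSpace.comap (fun x => (x ⊓ p.val.2) ⊔ p.val.1) u) :
    (@IsClosed L ustar.toTopologicalSpace S ↔ @IsClosed L u.toTopologicalSpace S) ∧
    (@IsSeqClosed L ustar.toTopologicalSpace S ↔ @IsSeqClosed L u.toTopologicalSpace S) ∧
    (∀ κ : Cardinal.{u}, Cardinal.aleph0 ≤ κ →
      (KClosed ustar.toTopologicalSpace κ S ↔ KClosed u.toTopologicalSpace κ S)) := by
  obtain rfl : ustar = clampUniformity u := hustar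
  have hle := UniformSpace.toTopologicalSpace_mono (le_clampUniformity hsup hinf)
  have hcont := fun a b (hab : a ≤ b) => continuous_clamp_clampUniformity u hab
  have hS : SupClosed S ∧ InfClosed S :=
    ⟨fun a ha b hb => hSsup a ha b hb, fun a ha b hb => hSinf a ha b hb⟩
  exact ⟨⟨fun h => h.mono hle, IsClosed.of_continuous_clamp hcont hS.1 hS.2⟩,
    ⟨fun h => h.mono hle, IsSeqClosed.of_continuous_clamp hcont hS.1 hS.2⟩,
    fun κ _ => ⟨fun h => h.mono hle, KClosed.of_continuous_clamp hcont hS.1 hS.2⟩⟩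
end
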